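/- The trace distance between the mixed states ρ⁰_odd = (1/(2^{n-1}·2^n)) Σ_{k ∈ Ω_n} Σ_{i ∈ Z_{2^n}} ρ⁰_{k,i} and ρ¹_odd = (1/(2^{n-1}·2^n)) Σ_{k ∈ Ω_n} Σ_{i ∈ Z_{2^n}} ρ¹_{k,i} equals 1/2^{n-1}. -/

import Mathlib

open Matrix Finset
open scoped ComplexOrder Kronecker

/-- The old Mathlib `Matrix.PosSemidef.sqrt` (removed upstream), with its original definition. -/
noncomputable def posSemidefSqrt {ι : Type*} [Fintype ι] [DecidableEq ι] {A : Matrix ι ι ℂ}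
    (hA : A.PosSemidef) : Matrix ι ι ℂ :=
  hA.1.eigenvectorUnitary.1 * diagonal ((↑) ∘ (√·) ∘ hA.1.eigenvalues) *
    (star hA.1.eigenvectorUnitary : Matrix ι ι ℂ)

/-- Trace norm `tr √(Aᴴ A)` of a complex square matrix. -/
noncomputable def traceNorm {ι : Type*} [Fintype ι] [DecidableEq ι] (A : Matrix ι ι ℂ) : ℝ :=
  ((posSemidefSqrt (Matrix.posSemidef_conjTranspose_mul_self A)).trace).re

/-- Bitwise XOR on bit strings. -/
def xo {n : ℕ} (i k : Fin n → Bool) : Fin n → Bool := fun j => xor (i j) (k j)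

/-- Hamming weight of a bit string. -/
def wt {n : ℕ} (i : Fin n → Bool) : ℕ := (Finset.univ.filter fun j => i j = true).card

/-- The rank-one operator `|i⟩⟨j|`. -/
def ketbra {n : ℕ} (i j : Fin n → Bool) : Matrix (Fin n → Bool) (Fin n → Bool) ℂ :=
  Matrix.single i j 1

/-- `ρ⁰_{k,i} = ½(|i⟩+|i⊕k⟩)(⟨i|+⟨i⊕k|)`. -/
noncomputable def rho0 {n : ℕ} (k i : Fin n → Bool) : Matrix (Fin n → Bool) (Fin n → Bool) ℂ :=
  (1/2 : ℂ) • (ketbra i i + ketbra i (xo i k) + ketbra (xo i k) i + ketbra (xo i k) (xo i k))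

/-- `ρ¹_{k,i} = ½(|i⟩-|i⊕k⟩)(⟨i|-⟨i⊕k|)`. -/
noncomputable def rho1 {n : ℕ} (k i : Fin n → Bool) : Matrix (Fin n → Bool) (Fin n → Bool) ℂ :=
  (1/2 : ℂ) • (ketbra i i - ketbra i (xo i k) - ketbra (xo i k) i + ketbra (xo i k) (xo i k))

/-- `Ω_n`, the set of bit strings of odd Hamming weight. -/
def Omega (n : ℕ) : Finset (Fin n → Bool) := Finset.univ.filter fun k => Odd (wt k)
/-- The averaged state `ρᵇ_odd`. -/
noncomputable def rhoOdd (n : ℕ) (b : Bool) : Matrix (Fin n → Bool) (Fin n → Bool) ℂ :=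
  ((1 : ℂ) / (2 ^ (n-1) * 2 ^ n)) •
    ∑ k ∈ Omega n, ∑ i : Fin n → Bool, (if b then rho1 k i else rho0 k i)


/-!
Write `c = 2 / (2^(n-1) 2^n)`. The difference `ρ⁰_odd - ρ¹_odd` has entry `c` at `(a, b)` when
`a ⊕ b` has odd weight, i.e. when `a` and `b` have opposite parities, and `0` otherwise. Both this
matrix and the block matrix `E` of "equal parity" are instances of `[p b = p a + s]` for a map `p`
into a group with equally large fibres, and such matrices multiply like the group elements. Hence
`ΔᴴΔ = c² 2^(n-1) E = (c E)²`, and as `E` is positive semidefinite, `|Δ| = c E` has trace `c 2^n`.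
-/

open scoped MatrixOrder in
lemma posSemidefSqrt_eq_of_mul_self {ι : Type*} [Fintype ι] [DecidableEq ι] {A D : Matrix ι ι ℂ}
    (hA : A.PosSemidef) (hD : D.PosSemidef) (h : D * D = A) : posSemidefSqrt hA = D := by
  rw [← CFC.sqrt_unique h hD.nonneg, CFC.sqrt_eq_cfc, cfc_nnreal_eq_real _ A, hA.1.cfc_eq]
  unfold posSemidefSqrt IsHermitian.cfc
  simp only [Unitary.conjStarAlgAut_apply]
  congr 2
  funext i j
  simp [diagonal_apply, max_eq_left (hA.eigenvalues_nonneg i)]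

lemma traceNorm_eq_re_trace_of_mul_self {ι : Type*} [Fintype ι] [DecidableEq ι]
    {A D : Matrix ι ι ℂ} (hD : D.PosSemidef) (h : D * D = Aᴴ * A) :
    traceNorm A = D.trace.re := by
  rw [traceNorm, posSemidefSqrt_eq_of_mul_self _ hD h]

section shiftMatrix

variable {ι G : Type*} [AddGroup G] [DecidableEq G]

def shiftMatrix (p : ι → G) (s : G) : Matrix ι ι ℂ :=
  of fun a b => if p b = p a + s then 1 else 0

lemma shiftMatrix_mul_shiftMatrix [Fintype ι] {p : ι → G} {m : ℕ} (hp : ∀ g, #{i | p i = g} = m)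
    (s t : G) : shiftMatrix p s * shiftMatrix p t = (m : ℂ) • shiftMatrix p (s + t) := by
  ext a b
  have hsummand : ∀ k, shiftMatrix p s a k * shiftMatrix p t k b =
      if p k = p a + s then shiftMatrix p (s + t) a b else 0 := by
    intro k
    by_cases hk : p k = p a + s <;> simp [shiftMatrix, hk, add_assoc]
  rw [mul_apply, Finset.sum_congr rfl fun k _ => hsummand k, Finset.sum_ite, Finset.sum_const_zero,
    Finset.sum_const, hp, add_zero, nsmul_eq_mul, Matrix.smul_apply, smul_eq_mul]

lemma conjTranspose_shiftMatrix (p : ι → G) (s : G) : (shiftMatrix p s)ᴴ = shiftMatrix p (-s) := by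
  ext a b
  simp only [shiftMatrix, conjTranspose_apply, of_apply, eq_add_neg_iff_add_eq,
    eq_comm (a := p b + s)]
  split_ifs <;> simp

lemma posSemidef_shiftMatrix_zero [Fintype ι] [Fintype G] (p : ι → G) :
    (shiftMatrix p 0).PosSemidef := by
  let B : Matrix G ι ℂ := of fun g i => if p i = g then 1 else 0
  have h : shiftMatrix p 0 = Bᴴ * B := by
    ext a b
    simp [B, shiftMatrix, mul_apply, eq_comm]
  rw [h]
  exact posSemidef_conjTranspose_mul_self B

lemma trace_shiftMatrix_zero [Fintype ι] (p : ι → G) :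
    (shiftMatrix p 0).trace = Fintype.card ι := by
  simp [shiftMatrix, trace]

lemma traceNorm_smul_shiftMatrix [Fintype ι] [DecidableEq ι] [Fintype G] {p : ι → G} {m : ℕ}
    (hp : ∀ g, #{i | p i = g} = m) (s : G) {c : ℝ} (hc : 0 ≤ c) :
    traceNorm ((c : ℂ) • shiftMatrix p s) = c * Fintype.card ι := by
  have hD : ((c : ℂ) • shiftMatrix p 0).PosSemidef :=
    (posSemidef_shiftMatrix_zero p).smul (Complex.zero_le_real.mpr hc)
  rw [traceNorm_eq_re_trace_of_mul_self hD, trace_smul, trace_shiftMatrix_zero]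
  · simp
  rw [conjTranspose_smul, conjTranspose_shiftMatrix, smul_mul_smul, smul_mul_smul,
    shiftMatrix_mul_shiftMatrix hp, shiftMatrix_mul_shiftMatrix hp, neg_add_cancel, add_zero,
    Complex.star_def, Complex.conj_ofReal]

end shiftMatrix

section bitStrings

variable {n : ℕ}

lemma xo_comm (a b : Fin n → Bool) : xo a b = xo b a := by
  funext j; simp [xo, Bool.xor_comm]

lemma xo_eq_iff (a k b : Fin n → Bool) : xo a k = b ↔ k = xo a b := by
  constructor <;> rintro rfl <;> funext j <;> simp [xo]

lemma xo_xo_cancel_right (a b : Fin n → Bool) : xo (xo a b) b = a := by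
  funext j; simp [xo]

def parity (k : Fin n → Bool) : ZMod 2 := wt k

lemma parity_eq_sum (k : Fin n → Bool) : parity k = ∑ j, if k j then 1 else 0 := by
  rw [parity, wt, Finset.natCast_card_filter]

lemma parity_xo (a b : Fin n → Bool) : parity (xo a b) = parity a + parity b := by
  simp only [parity_eq_sum, xo, ← Finset.sum_add_distrib]
  have hbit : ∀ x y : Bool,
      (if xor x y then (1 : ZMod 2) else 0) = (if x then 1 else 0) + (if y then 1 else 0) := by
    decide
  exact Finset.sum_congr rfl fun j _ => hbit (a j) (b j)

lemma mem_Omega_iff (k : Fin n → Bool) : k ∈ Omega n ↔ parity k = 1 := by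
  simp [Omega, parity, ZMod.natCast_eq_one_iff_odd]

lemma xo_mem_Omega_iff (a b : Fin n → Bool) : xo a b ∈ Omega n ↔ parity b = parity a + 1 := by
  have hZ2 : ∀ x y : ZMod 2, x + y = 1 ↔ y = x + 1 := by decide
  rw [mem_Omega_iff, parity_xo, hZ2]

lemma card_filter_parity (hn : 1 ≤ n) (v : ZMod 2) :
    #{k : Fin n → Bool | parity k = v} = 2 ^ (n - 1) := by
  let e : Fin n → Bool := Pi.single ⟨0, hn⟩ true
  have he : parity e = 1 := by
    simp [e, parity_eq_sum, Pi.single_apply]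
  have hflip : ∀ w,
      #{k : Fin n → Bool | parity k = w} = #{k : Fin n → Bool | parity k = w + 1} := by
    intro w
    refine Finset.card_nbij' (xo · e) (xo · e) ?_ ?_ ?_ ?_ <;> intro k hk <;>
      simp_all [parity_xo, xo_xo_cancel_right, add_assoc, CharTwo.add_self_eq_zero]
  have htotal :
      #{k : Fin n → Bool | parity k = 0} + #{k : Fin n → Bool | parity k = 1} = 2 ^ n := by
    have hZ2 : ∀ x : ZMod 2, x = 1 ↔ ¬x = 0 := by decide
    simp only [hZ2, Finset.card_filter_add_card_filter_not]
    simp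
  have hpow : 2 ^ n = 2 * 2 ^ (n - 1) := by
    rw [← pow_succ']; congr 1; omega
  have h01 := hflip 0
  rw [zero_add] at h01
  obtain rfl | rfl : v = 0 ∨ v = 1 := by revert v; decide
  all_goals omega

end bitStrings

lemma rho0_sub_rho1 {n : ℕ} (k i : Fin n → Bool) :
    rho0 k i - rho1 k i = ketbra i (xo i k) + ketbra (xo i k) i := by
  simp only [rho0, rho1]
  module

lemma sum_rho0_sub_rho1_apply {n : ℕ} (k a b : Fin n → Bool) :
    ∑ i, (rho0 k i a b - rho1 k i a b) = if k = xo a b then 2 else 0 := by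
  have h1 : ∀ i, (i = a ∧ xo i k = b) ↔ (i = a ∧ k = xo a b) :=
    fun _ => and_congr_right fun hi => hi ▸ xo_eq_iff a k b
  have h2 : ∀ i, (xo i k = a ∧ i = b) ↔ (i = b ∧ k = xo a b) := by
    intro i
    rw [and_comm]
    refine and_congr_right ?_
    rintro rfl
    rw [xo_eq_iff, xo_comm]
  simp only [← Matrix.sub_apply, rho0_sub_rho1, Matrix.add_apply, ketbra, single_apply,
    Finset.sum_add_distrib, h1, h2, ite_and, Finset.sum_ite_eq', Finset.mem_univ, if_true]
  split_ifs <;> norm_num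

lemma rhoOdd_false_sub_true {n : ℕ} :
    rhoOdd n false - rhoOdd n true =
      ((2 / (2 ^ (n - 1) * 2 ^ n) : ℝ) : ℂ) • shiftMatrix parity 1 := by
  ext a b
  simp only [rhoOdd, Bool.false_eq_true, if_false, if_true, Matrix.sub_apply, Matrix.smul_apply,
    Matrix.sum_apply, smul_eq_mul]
  rw [← mul_sub, ← Finset.sum_sub_distrib]
  simp only [← Finset.sum_sub_distrib, sum_rho0_sub_rho1_apply, Finset.sum_ite_eq',
    xo_mem_Omega_iff, shiftMatrix, of_apply]
  split_ifs <;> push_cast <;> ring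

theorem traceDist_rhoOdd (n : ℕ) (hn : 1 ≤ n) :
    (1/2 : ℝ) * traceNorm (rhoOdd n false - rhoOdd n true) = 1 / 2 ^ (n-1) := by
  rw [rhoOdd_false_sub_true, traceNorm_smul_shiftMatrix (card_filter_parity hn) _ (by positivity),
    Fintype.card_fun, Fintype.card_bool, Fintype.card_fin]
  push_cast
  field_simp
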